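/- arXiv:1908.00677 — 2 statements merged into one kernel-verified Lean document; each statement's English description precedes it below -/
import Mathlib

section
/- Fix an integer m ≥ 1 and let φ(1+x) = φ(1) + x^{2m} for small x, with φ(1) > 0. Then there exist c, c' > 0 such that for all small δ > 0: c δ^{2m} ≤ φ(1+δ)^{n−1} − φ(1)^{n−1} ≤ c' δ^{2m}. Consequently, if |Γ_δ Δ Γ₀| ≥ c'' δ, the quantitative inequality P(Γ_δ) − P(Γ₀) ≥ C |Γ_δ Δ Γ₀|^{2+γ} can only hold if 2 + γ ≥ 2m, so γ must be at least 2m − 2. -/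
private lemma pow_diff_lower (a t : ℝ) (ha : 0 ≤ a) (ht : 0 ≤ t) (j : ℕ) :
    a ^ j * t ≤ (a + t) ^ (j + 1) - a ^ (j + 1) := by
  have h1 : a ^ j ≤ (a + t) ^ j := pow_le_pow_left₀ ha (by linarith) j
  have h2 : 0 ≤ a ^ j := by positivity
  rw [pow_succ, pow_succ]
  nlinarith [mul_le_mul_of_nonneg_right h1 (by linarith : (0:ℝ) ≤ a + t)]

private lemma pow_diff_upper (a t : ℝ) (ha : 0 ≤ a) (ht : 0 ≤ t) (ht1 : t ≤ 1) (j : ℕ) :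
    (a + t) ^ (j + 1) - a ^ (j + 1) ≤ (j + 1) * (a + 1) ^ j * t := by
  induction j with
  | zero => simp
  | succ j ih =>
    have h0 : a ^ (j + 1) ≤ (a + t) ^ (j + 1) := pow_le_pow_left₀ ha (by linarith) _
    have h1 : a ^ (j + 1) ≤ (a + 1) ^ (j + 1) := pow_le_pow_left₀ ha (by linarith) _
    have h2 : 0 ≤ (a + 1) ^ j := by positivity
    have h4 : 0 ≤ (a + t) ^ (j + 1) := by positivity
    have h5 : (a + t) * ((a + t) ^ (j + 1) - a ^ (j + 1)) ≤
        (a + 1) * (((j:ℝ) + 1) * (a + 1) ^ j * t) := by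
      calc (a + t) * ((a + t) ^ (j + 1) - a ^ (j + 1))
          ≤ (a + t) * (((j:ℝ) + 1) * (a + 1) ^ j * t) :=
            mul_le_mul_of_nonneg_left ih (by linarith)
        _ ≤ (a + 1) * (((j:ℝ) + 1) * (a + 1) ^ j * t) :=
            mul_le_mul_of_nonneg_right (by linarith) (by positivity)
    have h6 : a ^ (j + 1) * t ≤ (a + 1) ^ j * (a + 1) * t := by
      rw [← pow_succ]; exact mul_le_mul_of_nonneg_right h1 ht
    rw [pow_succ (a+t) (j+1), pow_succ a (j+1), pow_succ (a+1) j]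
    push_cast
    nlinarith [h5, h6]

/-- For an analytic warping function with a degenerate minimum of order `2m`, the perimeter
difference is comparable to `δ^(2m)`, so a power-type quantitative inequality with exponent
`2 + γ` forces `2 + γ ≥ 2m`. -/
theorem stmt12 (n m : ℕ) (hn : 2 ≤ n) (hm : 1 ≤ m) (φ : ℝ → ℝ)
    (hφ1 : 0 < φ 1)
    (hloc : ∃ ε > (0 : ℝ), ∀ x : ℝ, |x| < ε → φ (1 + x) = φ 1 + x ^ (2 * m)) :
    (∃ c > (0 : ℝ), ∃ c' > (0 : ℝ), ∃ ε > (0 : ℝ), ∀ δ ∈ Set.Ioo (0 : ℝ) ε,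
      c * δ ^ (2 * m) ≤ φ (1 + δ) ^ (n - 1) - φ 1 ^ (n - 1) ∧
      φ (1 + δ) ^ (n - 1) - φ 1 ^ (n - 1) ≤ c' * δ ^ (2 * m)) ∧
    (∀ C c'' γ : ℝ, 0 < C → 0 < c'' → 0 ≤ γ →
      (∃ ε > (0 : ℝ), ∀ δ ∈ Set.Ioo (0 : ℝ) ε,
        C * (c'' * δ) ^ (2 + γ) ≤ φ (1 + δ) ^ (n - 1) - φ 1 ^ (n - 1)) →
      2 * (m : ℝ) ≤ 2 + γ) := by
  obtain ⟨ε, hε, hφ⟩ := hloc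
  set a := φ 1 with ha
  set j := n - 2 with hj
  have hn1 : n - 1 = j + 1 := by omega
  -- main bound statement
  have key : ∀ δ ∈ Set.Ioo (0 : ℝ) (min ε 1),
      a ^ j * δ ^ (2 * m) ≤ φ (1 + δ) ^ (n - 1) - a ^ (n - 1) ∧
      φ (1 + δ) ^ (n - 1) - a ^ (n - 1) ≤ ((j : ℝ) + 1) * (a + 1) ^ j * δ ^ (2 * m) := by
    intro δ ⟨hδ0, hδε⟩
    have hδε' : δ < ε := lt_of_lt_of_le hδε (min_le_left _ _)
    have hδ1 : δ ≤ 1 := le_of_lt (lt_of_lt_of_le hδε (min_le_right _ _))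
    have hval : φ (1 + δ) = a + δ ^ (2 * m) := hφ δ (by rw [abs_of_pos hδ0]; exact hδε')
    have ht : (0:ℝ) ≤ δ ^ (2 * m) := by positivity
    have ht1 : δ ^ (2 * m) ≤ 1 := pow_le_one₀ hδ0.le hδ1
    rw [hval, hn1]
    exact ⟨pow_diff_lower a _ hφ1.le ht j, pow_diff_upper a _ hφ1.le ht ht1 j⟩
  have hc : (0:ℝ) < a ^ j := by positivity
  have hc' : (0:ℝ) < ((j : ℝ) + 1) * (a + 1) ^ j := by positivity
  have hεm : (0:ℝ) < min ε 1 := lt_min hε one_pos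
  constructor
  · exact ⟨a ^ j, hc, ((j : ℝ) + 1) * (a + 1) ^ j, hc', min ε 1, hεm, key⟩
  · intro C c'' γ hC hc'' hγ ⟨ε₂, hε₂, hquant⟩
    by_contra hlt
    push_neg at hlt
    set p : ℝ := 2 * m - (2 + γ) with hp
    have hp0 : 0 < p := by simpa [hp] using sub_pos.2 hlt
    set c' : ℝ := ((j : ℝ) + 1) * (a + 1) ^ j with hc'def
    set K : ℝ := C * c'' ^ (2 + γ) with hK
    have hKpos : 0 < K := mul_pos hC (Real.rpow_pos_of_pos hc'' _)
    -- for all δ in (0, ε₀): K ≤ c' * δ ^ p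
    set ε₀ : ℝ := min (min ε 1) ε₂ with hε₀def
    have hε₀ : 0 < ε₀ := lt_min hεm hε₂
    have main : ∀ δ : ℝ, δ ∈ Set.Ioo (0:ℝ) ε₀ → K ≤ c' * δ ^ p := by
      intro δ ⟨hδ0, hδε⟩
      have h1 := (key δ ⟨hδ0, lt_of_lt_of_le hδε (min_le_left _ _)⟩).2
      have h2 := hquant δ ⟨hδ0, lt_of_lt_of_le hδε (min_le_right _ _)⟩
      have hmul : (c'' * δ) ^ (2 + γ) = c'' ^ (2 + γ) * δ ^ (2 + γ) :=
        Real.mul_rpow hc''.le hδ0.le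
      have hchain : K * δ ^ (2 + γ) ≤ c' * δ ^ ((2 * m : ℕ) : ℝ) := by
        rw [Real.rpow_natCast]
        calc K * δ ^ (2 + γ) = C * (c'' * δ) ^ (2 + γ) := by rw [hmul, hK]; ring
          _ ≤ φ (1 + δ) ^ (n - 1) - a ^ (n - 1) := h2
          _ ≤ c' * δ ^ (2 * m) := h1
      have hsplit : ((2 * m : ℕ) : ℝ) = (2 + γ) + p := by push_cast [hp]; ring
      rw [hsplit, Real.rpow_add hδ0 (2 + γ) p] at hchain
      have hδpow : 0 < δ ^ (2 + γ) := Real.rpow_pos_of_pos hδ0 _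
      have h' : K * δ ^ ((2:ℝ) + γ) ≤ (c' * δ ^ p) * δ ^ ((2:ℝ) + γ) := by
        calc K * δ ^ ((2:ℝ) + γ) ≤ c' * (δ ^ ((2:ℝ) + γ) * δ ^ p) := hchain
          _ = (c' * δ ^ p) * δ ^ ((2:ℝ) + γ) := by ring
      exact le_of_mul_le_mul_right h' hδpow
    -- choose δ small enough to contradict
    set δ₀ : ℝ := min (ε₀ / 2) ((K / (2 * c')) ^ p⁻¹) with hδ₀def
    have hKc : 0 < K / (2 * c') := by positivity
    have hδ₀pos : 0 < δ₀ := lt_min (by linarith) (Real.rpow_pos_of_pos hKc _)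
    have hδ₀lt : δ₀ < ε₀ := lt_of_le_of_lt (min_le_left _ _) (by linarith)
    have hle := main δ₀ ⟨hδ₀pos, hδ₀lt⟩
    have hpow : δ₀ ^ p ≤ K / (2 * c') := by
      calc δ₀ ^ p ≤ ((K / (2 * c')) ^ p⁻¹) ^ p :=
            Real.rpow_le_rpow hδ₀pos.le (min_le_right _ _) hp0.le
        _ = K / (2 * c') := Real.rpow_inv_rpow hKc.le hp0.ne'
    have : c' * δ₀ ^ p ≤ K / 2 := by
      have := mul_le_mul_of_nonneg_left hpow hc'.le
      calc c' * δ₀ ^ p ≤ c' * (K / (2 * c')) := this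
        _ = K / 2 := by field_simp
    linarith
end

section
/- Suppose E_j minimizes the penalized functional Q_j(E) := (P(E) − I)/α(E)^{2+γ} + (α(E)/α(W_j) − 1)² over a class 𝓐 (with the convention that the first term is defined via approximation when α(E) = 0), where I = inf_𝓐 P, and suppose 0 < α(E_j) ≤ 1/2, |α(E_j) − α(W_j)| ≤ α(W_j)/2, and Q(E_j) ≤ m + 1 where m := inf_𝓜 Q < ∞. Then there is Λ > 0, depending only on m and the constants above, such that for every F ∈ 𝓐 with P(F) ≤ P(E_j): P(E_j) ≤ P(F) + Λ μ(E_j Δ F), where α is 1-Lipschitz in μ(· Δ ·). (Case 1: if α(E_j)^{2+γ} ≤ μ(E_j Δ F), use P(E_j) − I ≤ (m+1) α(E_j)^{2+γ} ≤ (m+1) μ(E_j Δ F) and P(F) ≥ I.) -/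
lemma aux_rpow_lip {p : ℝ} (hp : 1 ≤ p) {b a : ℝ} (hb : 0 ≤ b) (hba : b ≤ a) (ha : a ≤ 1) :
    a ^ p - b ^ p ≤ p * (a - b) := by
  have key : ∀ x ∈ Set.Icc (0:ℝ) 1,
      HasDerivWithinAt (fun x : ℝ => x ^ p) ((fun x : ℝ => p * x ^ (p - 1)) x)
        (Set.Icc 0 1) x := fun x _ =>
    (Real.hasDerivAt_rpow_const (Or.inr hp)).hasDerivWithinAt
  have bound : ∀ x ∈ Set.Icc (0:ℝ) 1, ‖(fun x : ℝ => p * x ^ (p - 1)) x‖ ≤ p := by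
    intro x hx
    have h1 : x ^ (p - 1) ≤ 1 := by
      rcases eq_or_lt_of_le hx.1 with h | h
      · rcases eq_or_lt_of_le (by linarith : (0:ℝ) ≤ p - 1) with h2 | h2
        · rw [← h, ← h2, Real.rpow_zero]
        · rw [← h, Real.zero_rpow (by linarith)]; norm_num
      · exact Real.rpow_le_one (le_of_lt h) hx.2 (by linarith)
    have hxp : 0 ≤ x ^ (p - 1) := Real.rpow_nonneg hx.1 _
    simp only [Real.norm_eq_abs, abs_mul, abs_of_nonneg (by linarith : (0:ℝ) ≤ p),
      abs_of_nonneg hxp]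
    nlinarith
  have hmem_a : a ∈ Set.Icc (0:ℝ) 1 := ⟨le_trans hb hba, ha⟩
  have hmem_b : b ∈ Set.Icc (0:ℝ) 1 := ⟨hb, le_trans hba ha⟩
  have := (convex_Icc (0:ℝ) 1).norm_image_sub_le_of_norm_hasDerivWithin_le
    key bound hmem_b hmem_a
  have h2 : |a ^ p - b ^ p| ≤ p * |a - b| := by simpa [Real.norm_eq_abs] using this
  calc a ^ p - b ^ p ≤ |a ^ p - b ^ p| := le_abs_self _
    _ ≤ p * |a - b| := h2
    _ = p * (a - b) := by rw [abs_of_nonneg (by linarith)]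

set_option maxHeartbeats 1000000 in
/-- Quasi-minimality of minimizers of the penalized functional (Lemma 3.6): under the stated
asymmetry and energy bounds, there is `Λ > 0` such that
`P(E) ≤ P(F) + Λ μ(E Δ F)` for every competitor `F` with `P(F) ≤ P(E)`. -/
theorem stmt18 {X : Type*} (P α : X → ℝ) (μd : X → X → ℝ)
    (hμd : ∀ F G, 0 ≤ μd F G) (hLip : ∀ F G, |α F - α G| ≤ μd F G)
    (I γ m w : ℝ) (hγ : 0 ≤ γ) (hI : ∀ F, I ≤ P F) (hw : 0 < w) (hm : 0 ≤ m)
    (E : X) (hαpos : 0 < α E) (hαhalf : α E ≤ 1 / 2) (hnear : |α E - w| ≤ w / 2)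
    (hQ : (P E - I) / α E ^ (2 + γ) ≤ m + 1)
    (hmin : ∀ F : X, (P E - I) / α E ^ (2 + γ) + (α E / w - 1) ^ 2 ≤
      (P F - I) / α F ^ (2 + γ) + (α F / w - 1) ^ 2) :
    ∃ Λ > (0 : ℝ), ∀ F : X, P F ≤ P E → P E ≤ P F + Λ * μd E F := by
  set p : ℝ := 2 + γ with hp_def
  clear_value p
  have hp1 : (1:ℝ) ≤ p := by simp [hp_def]; linarith
  have hp0 : (0:ℝ) < p := by linarith
  set a : ℝ := α E with ha_def
  clear_value a
  have hap : 0 < a ^ p := Real.rpow_pos_of_pos hαpos p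
  have ha1 : a ≤ 1 := by linarith
  have hap1 : a ^ p ≤ 1 := Real.rpow_le_one (le_of_lt hαpos) ha1 (le_of_lt hp0)
  -- a^p ≤ a^2 ≤ a/2
  have hap_le : a ^ p ≤ a / 2 := by
    have h1 : a ^ p ≤ a ^ (2:ℝ) :=
      Real.rpow_le_rpow_of_exponent_ge hαpos ha1 (by simp [hp_def]; linarith)
    have h2 : a ^ (2:ℝ) = a * a := by
      rw [show (2:ℝ) = ((2:ℕ):ℝ) by norm_num, Real.rpow_natCast]; ring
    have h3 : a * a ≤ a * (1/2) := mul_le_mul_of_nonneg_left (by linarith) hαpos.le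
    calc a ^ p ≤ a ^ (2:ℝ) := h1
      _ = a * a := h2
      _ ≤ a * (1/2) := h3
      _ = a / 2 := by ring
  have h2p : (0:ℝ) < 2 ^ p := Real.rpow_pos_of_pos (by norm_num) p
  set C₂ : ℝ := (3/2 + 2*w) / w^2 with hC2_def
  clear_value C₂
  have hC2 : 0 ≤ C₂ := by rw [hC2_def]; positivity
  set Λ : ℝ := (m+1) + (m+1) * 2 ^ p * p + C₂ + 1 with hΛ_def
  clear_value Λ
  have hK0 : 0 ≤ (m+1) * 2 ^ p * p :=
    mul_nonneg (mul_nonneg (by linarith) h2p.le) hp0.le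
  have hΛpos : 0 < Λ := by
    simp only [hΛ_def]; linarith
  refine ⟨Λ, hΛpos, fun F hPF => ?_⟩
  have hμ : 0 ≤ μd E F := hμd E F
  have hPEI : P E - I ≤ (m+1) * a ^ p := by
    rw [div_le_iff₀ hap] at hQ; linarith
  rcases le_or_gt (a ^ p) (μd E F) with hcase | hcase
  · -- Case 1
    have hIF := hI F
    have hbnd : P E - I ≤ (m+1) * μd E F := by
      calc P E - I ≤ (m+1) * a ^ p := hPEI
        _ ≤ (m+1) * μd E F := mul_le_mul_of_nonneg_left hcase (by linarith)
    have hΛge : m + 1 ≤ Λ := by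
      simp only [hΛ_def]; linarith
    have hfin : (m + 1) * μd E F ≤ Λ * μd E F :=
      mul_le_mul_of_nonneg_right hΛge hμ
    linarith
  · -- Case 2: μd E F < a ^ p
    set b : ℝ := α F with hb_def
    clear_value b
    have hab : |a - b| ≤ μd E F := by rw [ha_def, hb_def]; exact hLip E F
    have habs := abs_le.mp hab
    have hb_lb : a / 2 < b := by
      have : a - b ≤ μd E F := habs.2
      linarith
    have hb_pos : 0 < b := by linarith
    have hb_ub : b ≤ 1 := by
      have : -(μd E F) ≤ a - b := habs.1
      linarith
    have hbp : 0 < b ^ p := Real.rpow_pos_of_pos hb_pos p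
    have hFI : 0 ≤ P F - I := by linarith [hI F]
    -- from hmin
    have hmin' := hmin F
    rw [← hb_def] at hmin'
    have hkey : (P E - I) / a ^ p ≤ (P F - I) / b ^ p +
        ((b/w - 1)^2 - (a/w - 1)^2) := by linarith
    -- bound the D term
    have hD : (b/w - 1)^2 - (a/w - 1)^2 ≤ C₂ * μd E F := by
      have h1 : (b/w - 1)^2 - (a/w - 1)^2 = ((b - a)/w) * ((a + b)/w - 2) := by
        field_simp; ring
      have h2 : |((b - a)/w) * ((a + b)/w - 2)| ≤ (μd E F / w) * ((3/2)/w + 2) := by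
        rw [abs_mul]
        apply mul_le_mul
        · rw [abs_div, abs_of_pos hw, abs_sub_comm]
          exact div_le_div_of_nonneg_right hab hw.le
        · have hsum : 0 ≤ a + b := by linarith
          have hsum2 : a + b ≤ 3/2 := by linarith
          have : |(a + b)/w - 2| ≤ (a+b)/w + 2 := by
            have h3 : 0 ≤ (a+b)/w := by positivity
            rw [abs_le]; constructor <;> linarith [abs_nonneg ((a+b)/w - 2)]
          refine this.trans ?_
          have : (a+b)/w ≤ (3/2)/w := div_le_div_of_nonneg_right hsum2 hw.le
          linarith
        · exact abs_nonneg _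
        · positivity
      have h3 : (μd E F / w) * ((3/2)/w + 2) = C₂ * μd E F := by
        simp only [hC2_def]; field_simp
      calc (b/w - 1)^2 - (a/w - 1)^2 = ((b - a)/w) * ((a + b)/w - 2) := h1
        _ ≤ |((b - a)/w) * ((a + b)/w - 2)| := le_abs_self _
        _ ≤ (μd E F / w) * ((3/2)/w + 2) := h2
        _ = C₂ * μd E F := by rw [h3]
    -- multiply hkey by a^p
    have hmul : P E - I ≤ (P F - I) * (a ^ p / b ^ p) + C₂ * μd E F := by
      have h1 : (P E - I) ≤ ((P F - I) / b ^ p + ((b/w - 1)^2 - (a/w - 1)^2)) * a ^ p := by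
        rw [← div_le_iff₀ hap]; exact hkey
      have hDterm : ((b/w - 1)^2 - (a/w - 1)^2) * a ^ p ≤ C₂ * μd E F := by
        rcases le_or_gt ((b/w - 1)^2 - (a/w - 1)^2) 0 with h | h
        · exact le_trans (mul_nonpos_of_nonpos_of_nonneg h hap.le) (mul_nonneg hC2 hμ)
        · calc ((b/w - 1)^2 - (a/w - 1)^2) * a ^ p
              ≤ ((b/w - 1)^2 - (a/w - 1)^2) * 1 := mul_le_mul_of_nonneg_left hap1 h.le
            _ = (b/w - 1)^2 - (a/w - 1)^2 := mul_one _
            _ ≤ C₂ * μd E F := hD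
      have h1' : P E - I ≤ (P F - I) * (a ^ p / b ^ p)
          + ((b/w - 1)^2 - (a/w - 1)^2) * a ^ p := by
        calc P E - I ≤ ((P F - I) / b ^ p + ((b/w - 1)^2 - (a/w - 1)^2)) * a ^ p := h1
          _ = (P F - I) * (a ^ p / b ^ p) + ((b/w - 1)^2 - (a/w - 1)^2) * a ^ p := by
            ring
      linarith
    -- bound the main term
    have hmain : (P F - I) * (a ^ p / b ^ p) - (P F - I) ≤ (m+1) * 2 ^ p * p * μd E F := by
      rcases le_or_gt a b with hle | hlt
      · have h1 : a ^ p ≤ b ^ p := Real.rpow_le_rpow (le_of_lt hαpos) hle (le_of_lt hp0)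
        have h2 : a ^ p / b ^ p ≤ 1 := by rw [div_le_one hbp]; exact h1
        have h4 : (P F - I) * (a ^ p / b ^ p) ≤ (P F - I) * 1 :=
          mul_le_mul_of_nonneg_left h2 hFI
        have h3 : 0 ≤ (m+1) * 2 ^ p * p * μd E F :=
          mul_nonneg (mul_nonneg (mul_nonneg (by linarith) h2p.le) hp0.le) hμ
        linarith
      · -- b < a
        have hdiff : a ^ p - b ^ p ≤ p * μd E F := by
          have hmvt := aux_rpow_lip hp1 (le_of_lt hb_pos) (le_of_lt hlt) ha1
          have hstep : p * (a - b) ≤ p * μd E F :=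
            mul_le_mul_of_nonneg_left habs.2 hp0.le
          linarith
        have hPFI : P F - I ≤ (m+1) * a ^ p := by linarith
        have hbp_lb : a ^ p / 2 ^ p ≤ b ^ p := by
          have h1 : (a / 2) ^ p ≤ b ^ p :=
            Real.rpow_le_rpow (by positivity) (le_of_lt hb_lb) (le_of_lt hp0)
          rwa [Real.div_rpow (le_of_lt hαpos) (by norm_num)] at h1
        have hfrac : a ^ p / b ^ p - 1 = (a ^ p - b ^ p) / b ^ p := by
          field_simp
        have h1 : (P F - I) * (a ^ p / b ^ p) - (P F - I)
            = (P F - I) * ((a ^ p - b ^ p) / b ^ p) := by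
          rw [← hfrac]; ring
        rw [h1]
        have h2 : (P F - I) / b ^ p ≤ (m+1) * 2 ^ p := by
          have key : a ^ p ≤ 2 ^ p * b ^ p := by
            rw [div_le_iff₀ h2p] at hbp_lb; linarith
          rw [div_le_iff₀ hbp]
          calc P F - I ≤ (m+1) * a ^ p := hPFI
            _ ≤ (m+1) * (2 ^ p * b ^ p) :=
              mul_le_mul_of_nonneg_left key (by linarith)
            _ = (m+1) * 2 ^ p * b ^ p := by ring
        have h3 : 0 ≤ a ^ p - b ^ p := by
          have := Real.rpow_le_rpow (le_of_lt hb_pos) (le_of_lt hlt) (le_of_lt hp0)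
          linarith
        have h4 : (P F - I) * ((a ^ p - b ^ p) / b ^ p)
            = ((P F - I) / b ^ p) * (a ^ p - b ^ p) := by ring
        rw [h4]
        calc ((P F - I) / b ^ p) * (a ^ p - b ^ p) ≤ ((m+1) * 2 ^ p) * (p * μd E F) := by
              apply mul_le_mul h2 hdiff h3 (by positivity)
          _ = (m+1) * 2 ^ p * p * μd E F := by ring
    -- combine
    have hΛge : (m+1) * 2 ^ p * p + C₂ ≤ Λ := by
      simp only [hΛ_def]; linarith
    have hfin : ((m+1) * 2 ^ p * p + C₂) * μd E F ≤ Λ * μd E F :=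
      mul_le_mul_of_nonneg_right hΛge hμ
    linarith only [hmul, hmain, hfin]
end
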